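/- arXiv:2405.04754 — 2 statements merged into one kernel-verified Lean document; each statement's English description precedes it below -/
import Mathlib

section
/- Let ρ be a separable bipartite quantum state on ℂ^m ⊗ ℂ^n, let ρ^τ be its partial transpose, and let T₁ = Tr((ρ^τ)†ρ^τ) and T₂ = Tr(((ρ^τ)†ρ^τ)²). Then √( √(2·(T₁² − T₂)) + T₁ ) ≤ 1, i.e. M₁ := √( √(2·(T₁² − T₂)) + T₁ ) − 1 ≤ 0. -/
open ComplexOrder Matrix Kronecker

/-- A bipartite quantum state `ρ` on `ℂ^m ⊗ ℂ^n` is separable if it is a finite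
convex combination of Kronecker products of states of the subsystems. -/
def IsSeparableState {m n : ℕ} (ρ : Matrix (Fin m × Fin n) (Fin m × Fin n) ℂ) : Prop :=
  ∃ (s : ℕ) (p : Fin s → ℝ) (A : Fin s → Matrix (Fin m) (Fin m) ℂ)
    (B : Fin s → Matrix (Fin n) (Fin n) ℂ),
    (∀ i, 0 ≤ p i) ∧ (∑ i, p i = 1) ∧
    (∀ i, (A i).PosSemidef ∧ (A i).trace = 1) ∧
    (∀ i, (B i).PosSemidef ∧ (B i).trace = 1) ∧
    ρ = ∑ i, (p i : ℂ) • (A i ⊗ₖ B i)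

/-- The partial transpose `ρ^τ` (with respect to the second subsystem):
`(ρ^τ)_{(i,j),(k,l)} = ρ_{(i,l),(k,j)}`. -/
def ptrans {m n : ℕ} (ρ : Matrix (Fin m × Fin n) (Fin m × Fin n) ℂ) :
    Matrix (Fin m × Fin n) (Fin m × Fin n) ℂ :=
  fun p q => ρ (p.1, q.2) (q.1, p.2)

/- ### Auxiliary lemmas -/

theorem aux_trace_pow_herm {N : Type*} [Fintype N] [DecidableEq N] {σ : Matrix N N ℂ}
    (hσ : σ.IsHermitian) (k : ℕ) :
    (σ ^ k).trace = ∑ i, ((hσ.eigenvalues i : ℂ)) ^ k := by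
  have main : ∀ (U : Matrix N N ℂ) (lam : N → ℝ), star U * U = 1 → U * star U = 1 →
      σ = U * diagonal ((↑) ∘ lam : N → ℂ) * star U →
      (σ ^ k).trace = ∑ i, ((lam i : ℂ)) ^ k := by
    intro U lam h1 h2 hspec
    have hpow : σ ^ k = U * (diagonal ((↑) ∘ lam : N → ℂ)) ^ k * star U := by
      induction k with
      | zero => simp [h2]
      | succ k ih =>
        rw [pow_succ, ih, pow_succ]
        conv_lhs => rw [hspec]
        simp only [Matrix.mul_assoc]
        rw [← Matrix.mul_assoc (star U) U, h1, Matrix.one_mul]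
    rw [hpow, Matrix.trace_mul_comm, ← Matrix.mul_assoc, h1, Matrix.one_mul,
      Matrix.diagonal_pow, Matrix.trace_diagonal]
    simp
  exact main _ _ (Matrix.mem_unitaryGroup_iff'.mp hσ.eigenvectorUnitary.2)
    (Matrix.mem_unitaryGroup_iff.mp hσ.eigenvectorUnitary.2) hσ.spectral_theorem

theorem aux_sq_sum_split {ι : Type*} [Fintype ι] [DecidableEq ι] (f : ι → ℝ) :
    (∑ i, f i) ^ 2 = ∑ i, (f i) ^ 2
      + ∑ p ∈ (Finset.univ : Finset ι).offDiag, f p.1 * f p.2 := by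
  rw [sq, Finset.sum_mul_sum, ← Finset.sum_product']
  rw [← Finset.diag_union_offDiag, Finset.sum_union (Finset.disjoint_diag_offDiag _),
    Finset.sum_diag]
  simp [sq]

theorem aux_real_key {ι : Type*} [Fintype ι] [DecidableEq ι] (lam : ι → ℝ)
    (h0 : ∀ i, 0 ≤ lam i) (h1 : ∑ i, lam i = 1) :
    Real.sqrt (Real.sqrt (2 * ((∑ i, lam i ^ 2) ^ 2 - ∑ i, lam i ^ 4))
      + ∑ i, lam i ^ 2) ≤ 1 := by
  set S1 := ∑ i, lam i ^ 2 with hS1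
  set S2 := ∑ i, lam i ^ 4 with hS2
  set P := (Finset.univ : Finset ι).offDiag with hP
  set x : ι × ι → ℝ := fun p => lam p.1 * lam p.2 with hx
  have hxnn : ∀ p ∈ P, 0 ≤ x p := fun p _ => mul_nonneg (h0 _) (h0 _)
  have e1 : 1 = S1 + ∑ p ∈ P, x p := by
    rw [← one_pow 2, ← h1, aux_sq_sum_split]
  have e2 : S1 ^ 2 = S2 + ∑ p ∈ P, (x p) ^ 2 := by
    have := aux_sq_sum_split (fun i => lam i ^ 2)
    rw [hS1, this]
    congr 1
    · simp [← pow_mul, hS2]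
    · exact Finset.sum_congr rfl fun p _ => by simp [hx, mul_pow]
  have key : 2 * ∑ p ∈ P, (x p) ^ 2 ≤ (∑ p ∈ P, x p) ^ 2 := by
    have swap_mem : ∀ p ∈ P, Prod.swap p ∈ P := by
      intro p hp
      rw [hP, Finset.mem_offDiag] at hp ⊢
      exact ⟨hp.2.1, hp.1, fun h => hp.2.2 h.symm⟩
    have hne : ∀ p ∈ P, p ≠ Prod.swap p := by
      intro p hp h
      rw [hP, Finset.mem_offDiag] at hp
      exact hp.2.2 (congrArg Prod.fst h)
    have step : ∀ p ∈ P, x p * (x p + x (Prod.swap p)) ≤ x p * ∑ q ∈ P, x q := by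
      intro p hp
      apply mul_le_mul_of_nonneg_left _ (hxnn p hp)
      have : x p + x (Prod.swap p) = ∑ q ∈ ({p, Prod.swap p} : Finset (ι × ι)), x q := by
        rw [Finset.sum_pair (hne p hp)]
      rw [this]
      apply Finset.sum_le_sum_of_subset_of_nonneg
      · intro q hq
        simp only [Finset.mem_insert, Finset.mem_singleton] at hq
        rcases hq with rfl | rfl
        · exact hp
        · exact swap_mem p hp
      · intro q hq _; exact hxnn q hq
    have hswap : ∀ p : ι × ι, x (Prod.swap p) = x p := fun p => mul_comm _ _
    calc 2 * ∑ p ∈ P, (x p) ^ 2 = ∑ p ∈ P, x p * (x p + x (Prod.swap p)) := by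
          rw [Finset.mul_sum]
          exact Finset.sum_congr rfl fun p _ => by rw [hswap]; ring
      _ ≤ ∑ p ∈ P, x p * ∑ q ∈ P, x q := Finset.sum_le_sum step
      _ = (∑ p ∈ P, x p) ^ 2 := by rw [← Finset.sum_mul, sq]
  have hS1nn : 0 ≤ S1 := Finset.sum_nonneg fun i _ => sq_nonneg _
  have hS1le : S1 ≤ 1 := by
    rw [e1]; nlinarith [Finset.sum_nonneg hxnn]
  have h2 : 2 * (S1 ^ 2 - S2) ≤ (1 - S1) ^ 2 := by
    rw [e2]
    have : (1 : ℝ) - S1 = ∑ p ∈ P, x p := by linarith [e1]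
    rw [this]; linarith [key]
  have hsq : Real.sqrt (2 * (S1 ^ 2 - S2)) ≤ 1 - S1 := by
    calc Real.sqrt (2 * (S1 ^ 2 - S2)) ≤ Real.sqrt ((1 - S1) ^ 2) := Real.sqrt_le_sqrt h2
      _ = 1 - S1 := Real.sqrt_sq (by linarith)
  rw [show (1 : ℝ) = Real.sqrt 1 by simp]
  exact Real.sqrt_le_sqrt (by linarith)

theorem aux_kron_posSemidef {m n : ℕ} {A : Matrix (Fin m) (Fin m) ℂ}
    {B : Matrix (Fin n) (Fin n) ℂ}
    (hA : A.PosSemidef) (hB : B.PosSemidef) : (A ⊗ₖ B).PosSemidef := by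
  exact hA.kronecker hB

theorem aux_smul_posSemidef {k : Type*} [Fintype k] {c : ℝ} (hc : 0 ≤ c)
    {M : Matrix k k ℂ} (hM : M.PosSemidef) : ((c : ℂ) • M).PosSemidef := by
  constructor
  · unfold Matrix.IsHermitian
    rw [Matrix.conjTranspose_smul, hM.1.eq]
    congr 1
    simp
  · exact (hM.smul (a := (c : ℂ)) (by exact_mod_cast hc)).2

theorem aux_ptrans_posSemidef {m n : ℕ} {ρ : Matrix (Fin m × Fin n) (Fin m × Fin n) ℂ}
    (hsep : IsSeparableState ρ) : (ptrans ρ).PosSemidef := by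
  obtain ⟨s, p, A, B, hp, -, hA, hB, rfl⟩ := hsep
  have hpt : ptrans (∑ i, (p i : ℂ) • (A i ⊗ₖ B i))
      = ∑ i, (p i : ℂ) • (A i ⊗ₖ (B i)ᵀ) := by
    funext q r
    simp only [ptrans, Matrix.sum_apply, Matrix.smul_apply, Matrix.kroneckerMap_apply,
      Matrix.transpose_apply, smul_eq_mul]
  rw [hpt]
  refine Finset.sum_induction _ Matrix.PosSemidef (fun a b ha hb => ha.add hb)
    Matrix.PosSemidef.zero (fun i _ => ?_)
  exact aux_smul_posSemidef (hp i) (aux_kron_posSemidef (hA i).1 ((hB i).1.transpose))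

/-- For a separable bipartite state `ρ`, with PT moments
`T₁ = Tr((ρ^τ)†ρ^τ)` and `T₂ = Tr(((ρ^τ)†ρ^τ)²)`, one has
`√(√(2(T₁² − T₂)) + T₁) ≤ 1`, i.e. `M₁ = √(√(2(T₁² − T₂)) + T₁) − 1 ≤ 0`. -/
theorem separable_pt_moment_bound (m n : ℕ)
    (ρ : Matrix (Fin m × Fin n) (Fin m × Fin n) ℂ)
    (hρ : ρ.PosSemidef) (htr : ρ.trace = 1) (hsep : IsSeparableState ρ) :
    Real.sqrt (Real.sqrt (2 * ((((ptrans ρ)ᴴ * ptrans ρ).trace.re) ^ 2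
        - (((ptrans ρ)ᴴ * ptrans ρ) ^ 2).trace.re))
      + ((ptrans ρ)ᴴ * ptrans ρ).trace.re) ≤ 1 ∧
    Real.sqrt (Real.sqrt (2 * ((((ptrans ρ)ᴴ * ptrans ρ).trace.re) ^ 2
        - (((ptrans ρ)ᴴ * ptrans ρ) ^ 2).trace.re))
      + ((ptrans ρ)ᴴ * ptrans ρ).trace.re) - 1 ≤ 0 := by
  have hpsd : (ptrans ρ).PosSemidef := aux_ptrans_posSemidef hsep
  have hherm : (ptrans ρ).IsHermitian := hpsd.1
  have h1 : (ptrans ρ)ᴴ * ptrans ρ = (ptrans ρ) ^ 2 := by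
    rw [hherm.eq, sq]
  have h2 : ((ptrans ρ)ᴴ * ptrans ρ) ^ 2 = (ptrans ρ) ^ 4 := by
    rw [h1, ← pow_mul]
  have htrσ : (ptrans ρ).trace = 1 := by
    rw [← htr]
    simp [Matrix.trace, Matrix.diag, ptrans]
  set lam := hherm.eigenvalues with hlam
  have h0 : ∀ i, 0 ≤ lam i := hpsd.eigenvalues_nonneg
  have hsum1 : ∑ i, lam i = 1 := by
    have h := aux_trace_pow_herm hherm 1
    rw [pow_one, htrσ] at h
    simp only [pow_one] at h
    exact_mod_cast h.symm
  have hT1 : ((ptrans ρ)ᴴ * ptrans ρ).trace.re = ∑ i, lam i ^ 2 := by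
    rw [h1, aux_trace_pow_herm hherm 2]
    rw [show (∑ i, ((lam i : ℂ)) ^ 2) = ((∑ i, lam i ^ 2 : ℝ) : ℂ) by push_cast; ring]
    exact Complex.ofReal_re _
  have hT2 : (((ptrans ρ)ᴴ * ptrans ρ) ^ 2).trace.re = ∑ i, lam i ^ 4 := by
    rw [h2, aux_trace_pow_herm hherm 4]
    rw [show (∑ i, ((lam i : ℂ)) ^ 4) = ((∑ i, lam i ^ 4 : ℝ) : ℂ) by push_cast; ring]
    exact Complex.ofReal_re _
  rw [hT1, hT2]
  have main := aux_real_key lam h0 hsum1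
  exact ⟨main, by linarith⟩
end

section
/- Lemma 2 (even case): Let m ≥ 2 be an even natural number. For an m×m positive semidefinite complex matrix ρ define f(ρ) = 1 − ∑_{i=1}^{m/2} [ (4i/(m²+2m))·Tr(ρ^i) + ((2m−4i+4)/(m²+2m))·Tr(ρ^{i+m/2}) ]. Then for any positive semidefinite m×m matrices ρ₁, …, ρ_s and nonnegative reals p₁, …, p_s with ∑_i p_i = 1, f(∑_i p_i ρ_i) ≥ ∑_i p_i f(ρ_i). -/
open ComplexOrder Matrix

/-- The function `f` of the paper (even `m`):
`f(ρ) = 1 − ∑_{i=1}^{m/2} [ (4i/(m²+2m))·Tr(ρ^i)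
        + ((2m−4i+4)/(m²+2m))·Tr(ρ^{i+m/2}) ]`. -/
noncomputable def fEven (m : ℕ) (ρ : Matrix (Fin m) (Fin m) ℂ) : ℝ :=
  1 - ∑ i ∈ Finset.Icc 1 (m / 2),
    ((4 * (i : ℝ)) / ((m : ℝ) ^ 2 + 2 * m) * ((ρ ^ i).trace).re +
     (2 * (m : ℝ) - 4 * i + 4) / ((m : ℝ) ^ 2 + 2 * m) * ((ρ ^ (i + m / 2)).trace).re)

lemma conj_pow_aux {n : Type*} [Fintype n] [DecidableEq n] (U M : Matrix n n ℂ)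
    (h1 : star U * U = 1) (h2 : U * star U = 1) (k : ℕ) :
    (star U * M * U) ^ k = star U * M ^ k * U := by
  induction k with
  | zero => simp [h1]
  | succ k ih =>
      rw [pow_succ, ih, pow_succ]
      calc star U * M ^ k * U * (star U * M * U)
          = star U * M ^ k * (U * star U) * M * U := by noncomm_ring
        _ = star U * (M ^ k * M) * U := by rw [h2]; noncomm_ring

lemma trace_pow_eq {n : Type*} [Fintype n] [DecidableEq n] {B : Matrix n n ℂ}
    (hB : B.IsHermitian) (k : ℕ) :
    ((B ^ k).trace) = ∑ t, ((hB.eigenvalues t : ℂ)) ^ k := by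
  set U : Matrix n n ℂ := (hB.eigenvectorUnitary : Matrix n n ℂ) with hU
  have h2 : U * star U = 1 := (Matrix.mem_unitaryGroup_iff).mp hB.eigenvectorUnitary.2
  have h1 : star U * U = 1 := (Matrix.mem_unitaryGroup_iff').mp hB.eigenvectorUnitary.2
  have hD : star U * B * U = diagonal (RCLike.ofReal ∘ hB.eigenvalues) :=
    by simpa [hU] using hB.conjStarAlgAut_star_eigenvectorUnitary
  have hc : (star U * B * U) ^ k = star U * B ^ k * U := conj_pow_aux U B h1 h2 k
  have htr : ((star U * B * U) ^ k).trace = (B ^ k).trace := by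
    rw [hc, Matrix.trace_mul_cycle, h2, one_mul]
  rw [← htr, hD, Matrix.diagonal_pow]
  simp [Matrix.trace, Matrix.diag]

/-- Jensen on the diagonal: for a PSD matrix `B`, `∑ i (B i i).re ^ k ≤ Tr(B^k).re`. -/
lemma sum_diag_pow_le {n : Type*} [Fintype n] [DecidableEq n] {B : Matrix n n ℂ}
    (hB : B.PosSemidef) (k : ℕ) :
    ∑ i, ((B i i).re) ^ k ≤ ((B ^ k).trace).re := by
  have hH := hB.isHermitian
  set U : Matrix n n ℂ := (hH.eigenvectorUnitary : Matrix n n ℂ) with hU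
  have h2 : U * star U = 1 := (Matrix.mem_unitaryGroup_iff).mp hH.eigenvectorUnitary.2
  have h1 : star U * U = 1 := (Matrix.mem_unitaryGroup_iff').mp hH.eigenvectorUnitary.2
  set e : n → ℝ := hH.eigenvalues with he
  have he0 : ∀ t ∈ Finset.univ, 0 ≤ e t := fun t _ => hB.eigenvalues_nonneg t
  set w : n → n → ℝ := fun i t => Complex.normSq (U i t) with hw
  have hw0 : ∀ i, ∀ t ∈ Finset.univ, 0 ≤ w i t := fun i t _ => Complex.normSq_nonneg _
  have hdiag : ∀ i, (B i i).re = ∑ t, w i t * e t := by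
    intro i
    have hB' : B i i = ∑ t, (w i t * e t : ℝ) := by
      conv_lhs => rw [hH.spectral_theorem, Unitary.conjStarAlgAut_apply]
      rw [Matrix.mul_apply]
      push_cast
      refine Finset.sum_congr rfl fun t _ => ?_
      rw [Matrix.mul_diagonal, Matrix.star_apply, RCLike.star_def, mul_right_comm,
        Complex.mul_conj]
      simp only [Function.comp_apply, hw, he]
      rfl
    rw [hB']
    push_cast
    simp
  have hrow : ∀ i, ∑ t, w i t = 1 := by
    intro i
    have h : (U * star U) i i = (1 : Matrix n n ℂ) i i := by rw [h2]
    rw [Matrix.mul_apply, Matrix.one_apply_eq] at h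
    have h' : ∑ t, (w i t : ℂ) = 1 := by
      rw [← h]
      refine Finset.sum_congr rfl fun t _ => ?_
      rw [Matrix.star_apply, RCLike.star_def, Complex.mul_conj]
    exact_mod_cast h'
  have hcol : ∀ t, ∑ i, w i t = 1 := by
    intro t
    have h : (star U * U) t t = (1 : Matrix n n ℂ) t t := by rw [h1]
    rw [Matrix.mul_apply, Matrix.one_apply_eq] at h
    have h' : ∑ i, (w i t : ℂ) = 1 := by
      rw [← h]
      refine Finset.sum_congr rfl fun i _ => ?_
      rw [Matrix.star_apply, RCLike.star_def, mul_comm, Complex.mul_conj]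
    exact_mod_cast h'
  have htr : ((B ^ k).trace).re = ∑ t, e t ^ k := by
    rw [trace_pow_eq hH k, Complex.re_sum]
    refine Finset.sum_congr rfl fun t _ => ?_
    rw [← Complex.ofReal_pow, Complex.ofReal_re]
  calc ∑ i, ((B i i).re) ^ k
      = ∑ i, (∑ t, w i t * e t) ^ k := by
        exact Finset.sum_congr rfl fun i _ => by rw [hdiag i]
    _ ≤ ∑ i, ∑ t, w i t * e t ^ k := Finset.sum_le_sum fun i _ =>
        Real.pow_arith_mean_le_arith_mean_pow Finset.univ (w i) e (hw0 i) (hrow i) he0 k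
    _ = ∑ t, (∑ i, w i t) * e t ^ k := by
        rw [Finset.sum_comm]
        exact Finset.sum_congr rfl fun t _ => (Finset.sum_mul _ _ _).symm
    _ = ∑ t, e t ^ k := by
        refine Finset.sum_congr rfl fun t _ => ?_
        rw [hcol t, one_mul]
    _ = ((B ^ k).trace).re := htr.symm

lemma trace_pow_re_eq {n : Type*} [Fintype n] [DecidableEq n] {B : Matrix n n ℂ}
    (hB : B.IsHermitian) (k : ℕ) :
    ((B ^ k).trace).re = ∑ t, hB.eigenvalues t ^ k := by
  rw [trace_pow_eq hB k, Complex.re_sum]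
  refine Finset.sum_congr rfl fun t _ => ?_
  rw [← Complex.ofReal_pow, Complex.ofReal_re]

lemma posSemidef_ofReal_smul {n : Type*} [Fintype n] {M : Matrix n n ℂ}
    (hM : M.PosSemidef) {c : ℝ} (hc : 0 ≤ c) : ((c : ℂ) • M).PosSemidef := by
  rw [Matrix.posSemidef_iff_dotProduct_mulVec]
  constructor
  · show ((c : ℂ) • M)ᴴ = (c : ℂ) • M
    rw [Matrix.conjTranspose_smul, hM.1.eq, RCLike.star_def, Complex.conj_ofReal]
  · intro x
    rw [Matrix.smul_mulVec, dotProduct_smul, smul_eq_mul]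
    exact mul_nonneg (Complex.zero_le_real.mpr hc) (hM.dotProduct_mulVec_nonneg x)

/-- Convexity of `ρ ↦ Tr(ρ^k).re` on PSD matrices. -/
lemma trace_pow_sum_le {n : Type*} [Fintype n] [DecidableEq n] {s : ℕ}
    (ρ : Fin s → Matrix n n ℂ) (hρ : ∀ j, (ρ j).PosSemidef)
    (p : Fin s → ℝ) (hp : ∀ j, 0 ≤ p j) (hps : ∑ j, p j = 1) (k : ℕ) :
    (((∑ j, (p j : ℂ) • ρ j) ^ k).trace).re ≤ ∑ j, p j * (((ρ j) ^ k).trace).re := by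
  set A := ∑ j, (p j : ℂ) • ρ j with hA
  have hApsd : A.PosSemidef :=
    Finset.sum_induction _ _ (fun a b ha hb => ha.add hb) .zero
      (fun j _ => posSemidef_ofReal_smul (hρ j) (hp j))
  have hH := hApsd.isHermitian
  set U : Matrix n n ℂ := (hH.eigenvectorUnitary : Matrix n n ℂ) with hU
  have h2 : U * star U = 1 := (Matrix.mem_unitaryGroup_iff).mp hH.eigenvectorUnitary.2
  have h1 : star U * U = 1 := (Matrix.mem_unitaryGroup_iff').mp hH.eigenvectorUnitary.2
  set e : n → ℝ := hH.eigenvalues with he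
  set σ : Fin s → Matrix n n ℂ := fun j => star U * ρ j * U with hσ
  have hσpsd : ∀ j, (σ j).PosSemidef := fun j => by
    simpa [hσ, Matrix.star_eq_conjTranspose] using (hρ j).conjTranspose_mul_mul_same U
  have hx0 : ∀ j i, 0 ≤ (σ j i i).re := by
    intro j i
    have h := (hσpsd j).dotProduct_mulVec_nonneg (Pi.single i 1)
    have h' : (0 : ℂ) ≤ σ j i i := by
      simpa [Matrix.mulVec_single, dotProduct, Pi.single_apply] using h
    simpa using (Complex.le_def.mp h').1
  have hDA : star U * A * U = diagonal (RCLike.ofReal ∘ e) := by simpa [hU] using hH.conjStarAlgAut_star_eigenvectorUnitary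
  have hsum : star U * A * U = ∑ j, (p j : ℂ) • σ j := by
    rw [hA, Finset.mul_sum, Finset.sum_mul]
    refine Finset.sum_congr rfl fun j _ => ?_
    simp [hσ, Matrix.mul_smul, Matrix.smul_mul]
  have hei : ∀ i, e i = ∑ j, p j * (σ j i i).re := by
    intro i
    have h := congrArg (fun M : Matrix n n ℂ => M i i) (hDA.symm.trans hsum)
    simp only [Matrix.diagonal_apply_eq, Function.comp_apply, Matrix.sum_apply,
      Matrix.smul_apply, smul_eq_mul] at h
    have h2' := congrArg Complex.re h
    simpa [Complex.re_sum, Complex.re_ofReal_mul] using h2'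
  calc ((A ^ k).trace).re
      = ∑ i, e i ^ k := trace_pow_re_eq hH k
    _ = ∑ i, (∑ j, p j * (σ j i i).re) ^ k :=
        Finset.sum_congr rfl fun i _ => by rw [hei i]
    _ ≤ ∑ i, ∑ j, p j * ((σ j i i).re) ^ k := Finset.sum_le_sum fun i _ =>
        Real.pow_arith_mean_le_arith_mean_pow Finset.univ p (fun j => (σ j i i).re)
          (fun j _ => hp j) hps (fun j _ => hx0 j i) k
    _ = ∑ j, p j * ∑ i, ((σ j i i).re) ^ k := by
        rw [Finset.sum_comm]
        exact Finset.sum_congr rfl fun j _ => (Finset.mul_sum _ _ _).symm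
    _ ≤ ∑ j, p j * (((σ j) ^ k).trace).re := Finset.sum_le_sum fun j _ =>
        mul_le_mul_of_nonneg_left (sum_diag_pow_le (hσpsd j) k) (hp j)
    _ = ∑ j, p j * (((ρ j) ^ k).trace).re := by
        refine Finset.sum_congr rfl fun j _ => ?_
        congr 2
        rw [hσ]
        rw [conj_pow_aux U (ρ j) h1 h2 k, Matrix.trace_mul_cycle, h2, one_mul]

/-- Lemma 2 (even case): `f` is concave on convex combinations of positive
semidefinite matrices: `f(∑ pᵢ ρᵢ) ≥ ∑ pᵢ f(ρᵢ)`. -/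
theorem fEven_concave (m : ℕ) (hm : 2 ≤ m) (hme : Even m)
    (s : ℕ) (ρ : Fin s → Matrix (Fin m) (Fin m) ℂ) (hρ : ∀ i, (ρ i).PosSemidef)
    (p : Fin s → ℝ) (hp : ∀ i, 0 ≤ p i) (hps : ∑ i, p i = 1) :
    fEven m (∑ i, (p i : ℂ) • ρ i) ≥ ∑ i, p i * fEven m (ρ i) := by
  have hden : (0 : ℝ) < (m : ℝ) ^ 2 + 2 * m := by
    have h2 : (2 : ℝ) ≤ (m : ℝ) := by exact_mod_cast hm
    nlinarith
  rw [ge_iff_le]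
  unfold fEven
  simp only [mul_sub, mul_one, Finset.sum_sub_distrib, hps]
  apply sub_le_sub_left
  -- swap sums on the RHS of the goal direction
  have hswap : ∑ j, p j * ∑ i ∈ Finset.Icc 1 (m / 2),
      ((4 * (i : ℝ)) / ((m : ℝ) ^ 2 + 2 * m) * (((ρ j) ^ i).trace).re +
       (2 * (m : ℝ) - 4 * i + 4) / ((m : ℝ) ^ 2 + 2 * m) * (((ρ j) ^ (i + m / 2)).trace).re)
      = ∑ i ∈ Finset.Icc 1 (m / 2),
        ((4 * (i : ℝ)) / ((m : ℝ) ^ 2 + 2 * m) * (∑ j, p j * (((ρ j) ^ i).trace).re) +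
         (2 * (m : ℝ) - 4 * i + 4) / ((m : ℝ) ^ 2 + 2 * m) *
           (∑ j, p j * (((ρ j) ^ (i + m / 2)).trace).re)) := by
    simp only [Finset.mul_sum]
    rw [Finset.sum_comm]
    refine Finset.sum_congr rfl fun i _ => ?_
    rw [← Finset.sum_add_distrib]
    refine Finset.sum_congr rfl fun j _ => ?_
    ring
  rw [hswap]
  refine Finset.sum_le_sum fun i hi => ?_
  obtain ⟨hi1, hi2⟩ := Finset.mem_Icc.mp hi
  have h2i : (i : ℝ) * 2 ≤ (m : ℝ) := by
    have := (Nat.le_div_iff_mul_le (by norm_num : 0 < 2)).mp hi2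
    exact_mod_cast this
  have hc : 0 ≤ (4 * (i : ℝ)) / ((m : ℝ) ^ 2 + 2 * m) := by positivity
  have hd : 0 ≤ (2 * (m : ℝ) - 4 * i + 4) / ((m : ℝ) ^ 2 + 2 * m) :=
    div_nonneg (by linarith) hden.le
  exact add_le_add
    (mul_le_mul_of_nonneg_left (trace_pow_sum_le ρ hρ p hp hps i) hc)
    (mul_le_mul_of_nonneg_left (trace_pow_sum_le ρ hρ p hp hps (i + m / 2)) hd)
end
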